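/- arXiv:1712.08222 — 11 statements merged into one kernel-verified Lean document; each statement's English description precedes it below -/
import Mathlib

section
/- (Theorem 1: price Nash equilibrium.) Fix T > 0, β ≥ 0, 0 ≤ a, 0 ≤ b, a + b < 1, q1, q2 ∈ ℝ, C1, C2, S1, S2 ≥ 0 and Z_A ∈ ℝ. Define π1(p1,p2) = p1·D1(p1,p2) − C1(a−Z_A)² − S1·q1²·(a−Z_A)² and π2(p1,p2) = p2·(1−D1(p1,p2)) − C2(1−b−Z_A)² − S2·q2²·(1−b−Z_A)², where D1(p1,p2) = a + (1−a−b)/2 + β(q1−q2)/(2T(1−a−b)) + (p2−p1)/(2T(1−a−b)). Then the pair p1* = (β/3)(q1−q2) + T(1−a−b)(1+(a−b)/3) and p2* = (β/3)(q2−q1) + T(1−a−b)(1+(b−a)/3) is the unique pair (p1,p2) ∈ ℝ² such that p1 maximizes π1(·,p2) over ℝ and p2 maximizes π2(p1,·) over ℝ. -/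
set_option maxHeartbeats 1000000


/-- Theorem 1: the unique price Nash equilibrium is
`p1* = (β/3)(q1−q2) + T(1−a−b)(1+(a−b)/3)` and
`p2* = (β/3)(q2−q1) + T(1−a−b)(1+(b−a)/3)`. -/
theorem price_nash_equilibrium
    (T β a b q1 q2 C1 C2 S1 S2 ZA : ℝ)
    (hT : 0 < T) (hβ : 0 ≤ β) (ha : 0 ≤ a) (hb : 0 ≤ b) (hab : a + b < 1)
    (hC1 : 0 ≤ C1) (hC2 : 0 ≤ C2) (hS1 : 0 ≤ S1) (hS2 : 0 ≤ S2) :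
    let D1 : ℝ → ℝ → ℝ := fun p1 p2 =>
      a + (1 - a - b) / 2 + β * (q1 - q2) / (2 * T * (1 - a - b)) +
        (p2 - p1) / (2 * T * (1 - a - b))
    let π1 : ℝ → ℝ → ℝ := fun p1 p2 =>
      p1 * D1 p1 p2 - C1 * (a - ZA) ^ 2 - S1 * q1 ^ 2 * (a - ZA) ^ 2
    let π2 : ℝ → ℝ → ℝ := fun p1 p2 =>
      p2 * (1 - D1 p1 p2) - C2 * (1 - b - ZA) ^ 2 - S2 * q2 ^ 2 * (1 - b - ZA) ^ 2
    let p1star : ℝ := (β / 3) * (q1 - q2) + T * (1 - a - b) * (1 + (a - b) / 3)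
    let p2star : ℝ := (β / 3) * (q2 - q1) + T * (1 - a - b) * (1 + (b - a) / 3)
    ((∀ p : ℝ, π1 p p2star ≤ π1 p1star p2star) ∧
      (∀ p : ℝ, π2 p1star p ≤ π2 p1star p2star)) ∧
    ∀ p1 p2 : ℝ,
      ((∀ p : ℝ, π1 p p2 ≤ π1 p1 p2) ∧ (∀ p : ℝ, π2 p1 p ≤ π2 p1 p2)) →
      p1 = p1star ∧ p2 = p2star := by
  intro D1 π1 π2 p1star p2star
  have hone : 0 < 1 - a - b := by linarith
  have hk : 0 < 2 * T * (1 - a - b) := by positivity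
  have hkne : 2 * T * (1 - a - b) ≠ 0 := ne_of_gt hk
  constructor
  · constructor
    · intro p
      have key : π1 p1star p2star - π1 p p2star
          = (p1star - p) ^ 2 / (2 * T * (1 - a - b)) := by
        simp only [π1, D1, p1star, p2star]
        field_simp
        ring
      have h0 : 0 ≤ (p1star - p) ^ 2 / (2 * T * (1 - a - b)) :=
        div_nonneg (sq_nonneg _) hk.le
      rw [← key] at h0
      exact sub_nonneg.mp h0
    · intro p
      have key : π2 p1star p2star - π2 p1star p
          = (p2star - p) ^ 2 / (2 * T * (1 - a - b)) := by
        simp only [π2, D1, p1star, p2star]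
        field_simp
        ring
      have h0 : 0 ≤ (p2star - p) ^ 2 / (2 * T * (1 - a - b)) :=
        div_nonneg (sq_nonneg _) hk.le
      rw [← key] at h0
      exact sub_nonneg.mp h0
  · rintro p1 p2 ⟨h1, h2⟩
    set M1 : ℝ := 2 * T * (1 - a - b) * (a + (1 - a - b) / 2) + β * (q1 - q2)
        + p2 - 2 * p1 with hM1def
    set M2 : ℝ := 2 * T * (1 - a - b) * (1 - a - (1 - a - b) / 2) - β * (q1 - q2)
        + p1 - 2 * p2 with hM2def
    have e1 := h1 (p1 + M1 / 2)
    have key1 : π1 (p1 + M1 / 2) p2 - π1 p1 p2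
        = M1 ^ 2 / (4 * (2 * T * (1 - a - b))) := by
      simp only [π1, D1, hM1def]
      field_simp
      ring
    have hM1 : M1 = 0 := by
      have h4k : 0 < 4 * (2 * T * (1 - a - b)) := by positivity
      have hle : M1 ^ 2 / (4 * (2 * T * (1 - a - b))) ≤ 0 := by
        rw [← key1]; exact sub_nonpos.mpr e1
      have : M1 ^ 2 ≤ 0 := by
        rcases div_nonpos_iff.mp hle with ⟨_, hden⟩ | ⟨h, _⟩
        · exact absurd h4k (by simpa using not_lt.mpr hden)
        · exact h
      exact pow_eq_zero_iff (by norm_num) |>.mp (le_antisymm this (sq_nonneg _))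
    have e2 := h2 (p2 + M2 / 2)
    have key2 : π2 p1 (p2 + M2 / 2) - π2 p1 p2
        = M2 ^ 2 / (4 * (2 * T * (1 - a - b))) := by
      simp only [π2, D1, hM2def]
      field_simp
      ring
    have hM2 : M2 = 0 := by
      have h4k : 0 < 4 * (2 * T * (1 - a - b)) := by positivity
      have hle : M2 ^ 2 / (4 * (2 * T * (1 - a - b))) ≤ 0 := by
        rw [← key2]; exact sub_nonpos.mpr e2
      have : M2 ^ 2 ≤ 0 := by
        rcases div_nonpos_iff.mp hle with ⟨_, hden⟩ | ⟨h, _⟩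
        · exact absurd h4k (by simpa using not_lt.mpr hden)
        · exact h
      exact pow_eq_zero_iff (by norm_num) |>.mp (le_antisymm this (sq_nonneg _))
    rw [hM1def] at hM1
    rw [hM2def] at hM2
    constructor
    · show p1 = p1star
      simp only [p1star]
      linear_combination (-2 / 3 : ℝ) * hM1 - (1 / 3 : ℝ) * hM2
    · show p2 = p2star
      simp only [p2star]
      linear_combination (-1 / 3 : ℝ) * hM1 - (2 / 3 : ℝ) * hM2
end

section
/- (Proposition 1: price Nash equilibrium with naïve consumers.) Fix T > 0, 0 ≤ a, 0 ≤ b, a + b < 1, q1, q2 ∈ ℝ, C1, C2, S1, S2 ≥ 0 and Z_A ∈ ℝ, and set β = 0 (consumers ignore security). With π1(p1,p2) = p1·D1(p1,p2) − C1(a−Z_A)² − S1·q1²·(a−Z_A)² and π2(p1,p2) = p2·(1−D1(p1,p2)) − C2(1−b−Z_A)² − S2·q2²·(1−b−Z_A)², where D1(p1,p2) = a + (1−a−b)/2 + (p2−p1)/(2T(1−a−b)), the unique pair (p1,p2) ∈ ℝ² such that p1 maximizes π1(·,p2) and p2 maximizes π2(p1,·) is p1* = T(1−a−b)(1+(a−b)/3)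 and p2* = T(1−a−b)(1+(b−a)/3). -/
/-- Proposition 1: with naïve consumers (β = 0), the unique price Nash
equilibrium is `p1* = T(1−a−b)(1+(a−b)/3)` and `p2* = T(1−a−b)(1+(b−a)/3)`. -/
theorem price_nash_equilibrium_naive
    (T a b q1 q2 C1 C2 S1 S2 ZA : ℝ)
    (hT : 0 < T) (ha : 0 ≤ a) (hb : 0 ≤ b) (hab : a + b < 1)
    (hC1 : 0 ≤ C1) (hC2 : 0 ≤ C2) (hS1 : 0 ≤ S1) (hS2 : 0 ≤ S2) :
    let D1 : ℝ → ℝ → ℝ := fun p1 p2 =>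
      a + (1 - a - b) / 2 + (p2 - p1) / (2 * T * (1 - a - b))
    let π1 : ℝ → ℝ → ℝ := fun p1 p2 =>
      p1 * D1 p1 p2 - C1 * (a - ZA) ^ 2 - S1 * q1 ^ 2 * (a - ZA) ^ 2
    let π2 : ℝ → ℝ → ℝ := fun p1 p2 =>
      p2 * (1 - D1 p1 p2) - C2 * (1 - b - ZA) ^ 2 - S2 * q2 ^ 2 * (1 - b - ZA) ^ 2
    let p1star : ℝ := T * (1 - a - b) * (1 + (a - b) / 3)
    let p2star : ℝ := T * (1 - a - b) * (1 + (b - a) / 3)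
    ((∀ p : ℝ, π1 p p2star ≤ π1 p1star p2star) ∧
      (∀ p : ℝ, π2 p1star p ≤ π2 p1star p2star)) ∧
    ∀ p1 p2 : ℝ,
      ((∀ p : ℝ, π1 p p2 ≤ π1 p1 p2) ∧ (∀ p : ℝ, π2 p1 p ≤ π2 p1 p2)) →
      p1 = p1star ∧ p2 = p2star := by
  intro D1 π1 π2 p1star p2star
  have hc : 0 < 1 - a - b := by linarith
  have hk : 0 < 2 * T * (1 - a - b) := by positivity
  have hk' : (2 * T * (1 - a - b)) ≠ 0 := ne_of_gt hk
  -- quadratic identities (division-free): distance to the best-response vertex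
  have key1 : ∀ p2 p : ℝ,
      (π1 (T * (1 - a - b) * (a + (1 - a - b) / 2) + p2 / 2) p2 - π1 p p2) *
          (2 * T * (1 - a - b)) =
        (p - (T * (1 - a - b) * (a + (1 - a - b) / 2) + p2 / 2)) ^ 2 := by
    intro p2 p
    simp only [π1, D1]
    field_simp
    ring
  have key2 : ∀ p1 p : ℝ,
      (π2 p1 (T * (1 - a - b) * (b + (1 - a - b) / 2) + p1 / 2) - π2 p1 p) *
          (2 * T * (1 - a - b)) =
        (p - (T * (1 - a - b) * (b + (1 - a - b) / 2) + p1 / 2)) ^ 2 := by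
    intro p1 p
    simp only [π2, D1]
    field_simp
    ring
  have hv1 : p1star = T * (1 - a - b) * (a + (1 - a - b) / 2) + p2star / 2 := by
    simp only [p1star, p2star]; ring
  have hv2 : p2star = T * (1 - a - b) * (b + (1 - a - b) / 2) + p1star / 2 := by
    simp only [p1star, p2star]; ring
  constructor
  · constructor
    · intro p
      have h := key1 p2star p
      rw [← hv1] at h
      nlinarith [sq_nonneg (p - p1star), hk, h]
    · intro p
      have h := key2 p1star p
      rw [← hv2] at h
      nlinarith [sq_nonneg (p - p2star), hk, h]
  · rintro p1 p2 ⟨h1, h2⟩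
    have e1 : p1 = T * (1 - a - b) * (a + (1 - a - b) / 2) + p2 / 2 := by
      have hm := h1 (T * (1 - a - b) * (a + (1 - a - b) / 2) + p2 / 2)
      have hid := key1 p2 p1
      have h0 : (p1 - (T * (1 - a - b) * (a + (1 - a - b) / 2) + p2 / 2)) ^ 2 = 0 := by
        have hle : (p1 - (T * (1 - a - b) * (a + (1 - a - b) / 2) + p2 / 2)) ^ 2 ≤ 0 := by
          rw [← hid]
          exact mul_nonpos_iff.mpr (Or.inr ⟨by linarith, hk.le⟩)
        exact le_antisymm hle (sq_nonneg _)
      have := pow_eq_zero_iff (n := 2) (by norm_num) |>.mp h0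
      linarith [this]
    have e2 : p2 = T * (1 - a - b) * (b + (1 - a - b) / 2) + p1 / 2 := by
      have hm := h2 (T * (1 - a - b) * (b + (1 - a - b) / 2) + p1 / 2)
      have hid := key2 p1 p2
      have h0 : (p2 - (T * (1 - a - b) * (b + (1 - a - b) / 2) + p1 / 2)) ^ 2 = 0 := by
        have hle : (p2 - (T * (1 - a - b) * (b + (1 - a - b) / 2) + p1 / 2)) ^ 2 ≤ 0 := by
          rw [← hid]
          exact mul_nonpos_iff.mpr (Or.inr ⟨by linarith, hk.le⟩)
        exact le_antisymm hle (sq_nonneg _)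
      have := pow_eq_zero_iff (n := 2) (by norm_num) |>.mp h0
      linarith [this]
    constructor
    · show p1 = T * (1 - a - b) * (1 + (a - b) / 3)
      linear_combination (4/3) * e1 + (2/3) * e2
    · show p2 = T * (1 - a - b) * (1 + (b - a) / 3)
      linear_combination (2/3) * e1 + (4/3) * e2
end

section
/- (Lemma 1: zero investment is not a Nash equilibrium for security-conscious consumers.) Fix T > 0, β > 0, 0 ≤ a, 0 ≤ b ≤ 1, a + b < 1, Z_A ∈ ℝ, C1, S1 ≥ 0 and Q > 0. Let π̂1(q1,q2) = (p1*(q1,q2))²/(2T(1−a−b)) − C1(a−Z_A)² − S1·q1²·(a−Z_A)² with p1*(q1,q2) = (β/3)(q1−q2) + T(1−a−b)(1+(a−b)/3). Then there exists q1 ∈ (0,Q] with π̂1(q1,0) > π̂1(0,0); in particular, q1 = 0 is not a best response to q2 = 0 on [0,Q], so (q1,q2) = (0,0) is not a quality Nash equilibrium. -/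
/-- Lemma 1: when consumers are security-conscious (β > 0), zero security
investment by both vendors is not a quality Nash equilibrium: vendor 1 has a
profitable deviation from `q1 = 0` against `q2 = 0`. -/
theorem zero_quality_not_nash
    (T β a b ZA C1 S1 Q : ℝ)
    (hT : 0 < T) (hβ : 0 < β) (ha : 0 ≤ a) (hb : 0 ≤ b) (hb1 : b ≤ 1)
    (hab : a + b < 1) (hC1 : 0 ≤ C1) (hS1 : 0 ≤ S1) (hQ : 0 < Q) :
    let p1star : ℝ → ℝ → ℝ := fun q1 q2 =>
      (β / 3) * (q1 - q2) + T * (1 - a - b) * (1 + (a - b) / 3)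
    let π1 : ℝ → ℝ → ℝ := fun q1 q2 =>
      (p1star q1 q2) ^ 2 / (2 * T * (1 - a - b)) -
        C1 * (a - ZA) ^ 2 - S1 * q1 ^ 2 * (a - ZA) ^ 2
    ∃ q1 : ℝ, q1 ∈ Set.Ioc (0:ℝ) Q ∧ π1 0 0 < π1 q1 0 := by
  intro p1star π1
  have hD : (0:ℝ) < 1 - a - b := by linarith
  have hE : (0:ℝ) < 1 + (a - b) / 3 := by linarith
  set d2 := (a - ZA) ^ 2 with hd2
  have hd2' : 0 ≤ d2 := sq_nonneg _
  set c := β * (1 + (a - b) / 3) / 3 with hc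
  have hcpos : 0 < c := by positivity
  set m := S1 * d2 + 1 with hm
  have hmpos : 0 < m := by positivity
  have hqmpos : 0 < c / m := by positivity
  refine ⟨min Q (c / m), ⟨lt_min hQ hqmpos, min_le_left _ _⟩, ?_⟩
  set q := min Q (c / m) with hq
  have hqpos : 0 < q := lt_min hQ hqmpos
  have hqle : q ≤ c / m := min_le_right _ _
  have key : S1 * d2 * q < c := by
    have h1 : S1 * d2 * q ≤ S1 * d2 * (c / m) :=
      mul_le_mul_of_nonneg_left hqle (by positivity)
    have h2 : S1 * d2 * (c / m) < m * (c / m) := by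
      apply mul_lt_mul_of_pos_right _ hqmpos
      linarith
    have h3 : m * (c / m) = c := by field_simp
    linarith
  have h2TD : 0 < 2 * T * (1 - a - b) := by positivity
  simp only [π1, p1star]
  rw [← hd2]
  have main : ((β / 3) * (0 - 0) + T * (1 - a - b) * (1 + (a - b) / 3)) ^ 2
      + S1 * q ^ 2 * d2 * (2 * T * (1 - a - b))
      < ((β / 3) * (q - 0) + T * (1 - a - b) * (1 + (a - b) / 3)) ^ 2 := by
    have hexp : ((β / 3) * (q - 0) + T * (1 - a - b) * (1 + (a - b) / 3)) ^ 2
        - ((β / 3) * (0 - 0) + T * (1 - a - b) * (1 + (a - b) / 3)) ^ 2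
        = (β / 3) ^ 2 * q ^ 2 + (2 * T * (1 - a - b)) * (c * q) := by
      rw [hc]; ring
    nlinarith [sq_nonneg (β * q), mul_pos h2TD hqpos,
      mul_lt_mul_of_pos_left key (mul_pos h2TD hqpos)]
  have hdiv : ((β / 3) * (0 - 0) + T * (1 - a - b) * (1 + (a - b) / 3)) ^ 2
        / (2 * T * (1 - a - b)) + S1 * q ^ 2 * d2
      < ((β / 3) * (q - 0) + T * (1 - a - b) * (1 + (a - b) / 3)) ^ 2
        / (2 * T * (1 - a - b)) := by
    rw [div_add' _ _ _ (ne_of_gt h2TD), div_lt_div_iff₀ h2TD h2TD]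
    nlinarith [mul_pos h2TD h2TD]
  have hz : S1 * (0:ℝ) ^ 2 * d2 = 0 := by ring
  linarith
end

section
/- (Theorem 2: price Nash equilibrium under a regulatory fine.) Fix T > 0, β ≥ 0, 0 ≤ a, 0 ≤ b, a + b < 1, q1, q2 ∈ ℝ, C1, C2, S1, S2 ≥ 0, Z_A ∈ ℝ, and fine amounts f1, f2 ≥ 0. Define π1(p1,p2) = (p1 − f1)·D1(p1,p2) − C1(a−Z_A)² − S1·q1²·(a−Z_A)² and π2(p1,p2) = (p2 − f2)·(1−D1(p1,p2)) − C2(1−b−Z_A)² − S2·q2²·(1−b−Z_A)², where D1(p1,p2) = a + (1−a−b)/2 + β(q1−q2)/(2T(1−a−b)) + (p2−p1)/(2T(1−a−b)). Then the pair p1* = (β/3)(q1−q2) + T(1−a−b)(1+(a−b)/3) + (2/3)f1 + (1/3)f2 and p2* = (β/3)(q2−q1) + T(1−a−b)(1+(b−a)/3) + (2/3)f2 + (1/3)f1 is the unique pair (p1,p2) ∈ ℝ² such that p1 maximizes π1(·,p2) over ℝ and p2 maximizes π2(p1,·) over ℝ. -/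
/-!
Each firm's profit is a concave quadratic in its own price, so its best response to the rival's
price is given by the first-order condition, which is linear in both prices. A pair of prices is
a Nash equilibrium exactly when it solves the resulting 2×2 linear system, whose unique solution
is the stated pair.
-/

theorem forall_linear_demand_profit_le_iff {k : ℝ} (hk : 0 < k) (E q f p₀ : ℝ) :
    (∀ p, (p - f) * (E + (q - p) / k) ≤ (p₀ - f) * (E + (q - p₀) / k)) ↔
      2 * p₀ = k * E + q + f := by
  set g := 2 * p₀ - (k * E + q + f) with hg
  have profit_gap : ∀ p, k * ((p₀ - f) * (E + (q - p₀) / k) - (p - f) * (E + (q - p) / k)) =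
      (p - p₀) * (p - p₀ + g) := fun p => by
    rw [hg]; field_simp; ring
  constructor
  · intro hmax
    -- the price `p₀ - g / 2` beats `p₀` by `(g / 2) ^ 2 / k`
    have hgap := profit_gap (p₀ - g / 2)
    have := mul_nonneg hk.le (sub_nonneg.mpr (hmax (p₀ - g / 2)))
    have hg0 : g = 0 := by nlinarith [sq_nonneg g]
    linarith
  · intro hfoc p
    have hg0 : g = 0 := by rw [hg]; linarith
    have hgap := profit_gap p
    rw [hg0, add_zero] at hgap
    have := (mul_nonneg_iff_of_pos_left hk).mp (hgap ▸ mul_self_nonneg (p - p₀))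
    linarith

theorem price_nash_equilibrium_fine_general
    (T β a b q1 q2 C1 C2 S1 S2 ZA f1 f2 : ℝ)
    (hT : 0 < T) (hab : a + b < 1) :
    let D1 : ℝ → ℝ → ℝ := fun p1 p2 =>
      a + (1 - a - b) / 2 + β * (q1 - q2) / (2 * T * (1 - a - b)) +
        (p2 - p1) / (2 * T * (1 - a - b))
    let π1 : ℝ → ℝ → ℝ := fun p1 p2 =>
      (p1 - f1) * D1 p1 p2 - C1 * (a - ZA) ^ 2 - S1 * q1 ^ 2 * (a - ZA) ^ 2
    let π2 : ℝ → ℝ → ℝ := fun p1 p2 =>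
      (p2 - f2) * (1 - D1 p1 p2) - C2 * (1 - b - ZA) ^ 2 - S2 * q2 ^ 2 * (1 - b - ZA) ^ 2
    let p1star : ℝ :=
      (β / 3) * (q1 - q2) + T * (1 - a - b) * (1 + (a - b) / 3) + (2 / 3) * f1 + (1 / 3) * f2
    let p2star : ℝ :=
      (β / 3) * (q2 - q1) + T * (1 - a - b) * (1 + (b - a) / 3) + (2 / 3) * f2 + (1 / 3) * f1
    ((∀ p : ℝ, π1 p p2star ≤ π1 p1star p2star) ∧
      (∀ p : ℝ, π2 p1star p ≤ π2 p1star p2star)) ∧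
    ∀ p1 p2 : ℝ,
      ((∀ p : ℝ, π1 p p2 ≤ π1 p1 p2) ∧ (∀ p : ℝ, π2 p1 p ≤ π2 p1 p2)) →
      p1 = p1star ∧ p2 = p2star := by
  intro D1 π1 π2 p1star p2star
  have hab' : 0 < 1 - a - b := by linarith
  have hk : 0 < 2 * T * (1 - a - b) := by positivity
  have hkE : 2 * T * (1 - a - b) * (a + (1 - a - b) / 2 + β * (q1 - q2) / (2 * T * (1 - a - b))) =
      T * (1 - a - b) * (1 + a - b) + β * (q1 - q2) := by
    field_simp [hab'.ne']
    ring
  have best_response₁ : ∀ p1 p2, (∀ p, π1 p p2 ≤ π1 p1 p2) ↔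
      2 * p1 = T * (1 - a - b) * (1 + a - b) + β * (q1 - q2) + p2 + f1 := by
    intro p1 p2
    simp only [π1, D1, sub_le_sub_iff_right]
    rw [forall_linear_demand_profit_le_iff hk, hkE]
  have best_response₂ : ∀ p1 p2, (∀ p, π2 p1 p ≤ π2 p1 p2) ↔
      2 * p2 = T * (1 - a - b) * (1 + b - a) - β * (q1 - q2) + p1 + f2 := by
    intro p1 p2
    have hD2 : ∀ p, 1 - D1 p1 p = (1 - (a + (1 - a - b) / 2 + β * (q1 - q2) / (2 * T * (1 - a - b))))
        + (p1 - p) / (2 * T * (1 - a - b)) := fun p => by simp only [D1]; ring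
    simp only [π2, hD2, sub_le_sub_iff_right]
    rw [forall_linear_demand_profit_le_iff hk, mul_sub, hkE]
    constructor <;> intro h <;> linarith
  refine ⟨⟨(best_response₁ _ _).2 ?_, (best_response₂ _ _).2 ?_⟩, fun p1 p2 ⟨h1, h2⟩ => ?_⟩
  · simp only [p1star, p2star]; ring
  · simp only [p1star, p2star]; ring
  · have e1 := (best_response₁ p1 p2).1 h1
    have e2 := (best_response₂ p1 p2).1 h2
    constructor <;> simp only [p1star, p2star] <;> linarith

/-- Theorem 2: under regulatory fines `f1, f2 ≥ 0`, the unique price Nash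
equilibrium is `p1* = (β/3)(q1−q2) + T(1−a−b)(1+(a−b)/3) + 2f1/3 + f2/3` and
`p2* = (β/3)(q2−q1) + T(1−a−b)(1+(b−a)/3) + 2f2/3 + f1/3`. -/
theorem price_nash_equilibrium_fine
    (T β a b q1 q2 C1 C2 S1 S2 ZA f1 f2 : ℝ)
    (hT : 0 < T) (hβ : 0 ≤ β) (ha : 0 ≤ a) (hb : 0 ≤ b) (hab : a + b < 1)
    (hC1 : 0 ≤ C1) (hC2 : 0 ≤ C2) (hS1 : 0 ≤ S1) (hS2 : 0 ≤ S2)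
    (hf1 : 0 ≤ f1) (hf2 : 0 ≤ f2) :
    let D1 : ℝ → ℝ → ℝ := fun p1 p2 =>
      a + (1 - a - b) / 2 + β * (q1 - q2) / (2 * T * (1 - a - b)) +
        (p2 - p1) / (2 * T * (1 - a - b))
    let π1 : ℝ → ℝ → ℝ := fun p1 p2 =>
      (p1 - f1) * D1 p1 p2 - C1 * (a - ZA) ^ 2 - S1 * q1 ^ 2 * (a - ZA) ^ 2
    let π2 : ℝ → ℝ → ℝ := fun p1 p2 =>
      (p2 - f2) * (1 - D1 p1 p2) - C2 * (1 - b - ZA) ^ 2 - S2 * q2 ^ 2 * (1 - b - ZA) ^ 2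
    let p1star : ℝ :=
      (β / 3) * (q1 - q2) + T * (1 - a - b) * (1 + (a - b) / 3) + (2 / 3) * f1 + (1 / 3) * f2
    let p2star : ℝ :=
      (β / 3) * (q2 - q1) + T * (1 - a - b) * (1 + (b - a) / 3) + (2 / 3) * f2 + (1 / 3) * f1
    ((∀ p : ℝ, π1 p p2star ≤ π1 p1star p2star) ∧
      (∀ p : ℝ, π2 p1star p ≤ π2 p1star p2star)) ∧
    ∀ p1 p2 : ℝ,
      ((∀ p : ℝ, π1 p p2 ≤ π1 p1 p2) ∧ (∀ p : ℝ, π2 p1 p ≤ π2 p1 p2)) →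
      p1 = p1star ∧ p2 = p2star :=
  price_nash_equilibrium_fine_general T β a b q1 q2 C1 C2 S1 S2 ZA f1 f2 hT hab
end

section
/- (Corollary 2: price equilibrium for naïve consumers under a fine.) Fix T > 0, 0 ≤ a, 0 ≤ b, a + b < 1, q1, q2 ∈ ℝ, C1, C2, S1, S2 ≥ 0, Z_A ∈ ℝ, fine amounts f1, f2 ≥ 0, and β = 0. With π1(p1,p2) = (p1 − f1)·D1(p1,p2) − C1(a−Z_A)² − S1·q1²·(a−Z_A)² and π2(p1,p2) = (p2 − f2)·(1−D1(p1,p2)) − C2(1−b−Z_A)² − S2·q2²·(1−b−Z_A)², where D1(p1,p2) = a + (1−a−b)/2 + (p2−p1)/(2T(1−a−b)), the unique pair (p1,p2) ∈ ℝ² of mutual best responses over ℝ is p1* = T(1−a−b)(1+(a−b)/3) + (2/3)f1 + (1/3)f2 and p2* = T(1−a−b)(1+(b−a)/3) + (2/3)f2 + (1/3)f1. -/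
/-!
Against a fixed rival price, a vendor's demand is affine in its own price with slope
`-1/c`, `c = 2T(1-a-b) > 0`, so its profit is a concave quadratic with a unique maximiser,
affine in the rival price. Mutual best responses are then the solutions of a
nonsingular 2×2 linear system.
-/

theorem forall_le_iff_eq_of_eq_sub_sq_div {g : ℝ → ℝ} {M v c : ℝ} (hc : 0 < c)
    (hg : ∀ p, g p = M - (p - v) ^ 2 / c) (x : ℝ) :
    (∀ p, g p ≤ g x) ↔ x = v := by
  simp only [hg, sub_le_sub_iff_left]
  constructor
  · intro h
    have hsq : (x - v) ^ 2 ≤ 0 := by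
      simpa [div_le_iff₀ hc] using h v
    exact sub_eq_zero.1 (pow_eq_zero_iff two_ne_zero |>.1 (le_antisymm hsq (sq_nonneg _)))
  · rintro rfl p
    rw [sub_self, zero_pow two_ne_zero, zero_div]
    positivity

theorem linear_demand_profit_eq {c : ℝ} (hc : c ≠ 0) (A q f p : ℝ) :
    (p - f) * (A + (q - p) / c) =
      (c * A + q - f) ^ 2 / (4 * c) - (p - (c * A + q + f) / 2) ^ 2 / c := by
  field_simp
  ring

theorem linear_demand_profit_le_iff {c : ℝ} (hc : 0 < c) (A q f x : ℝ) :
    (∀ p, (p - f) * (A + (q - p) / c) ≤ (x - f) * (A + (q - x) / c)) ↔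
      x = (c * A + q + f) / 2 :=
  forall_le_iff_eq_of_eq_sub_sq_div (g := fun p => (p - f) * (A + (q - p) / c)) hc
    (linear_demand_profit_eq hc.ne' A q f) x

theorem best_response_fixed_point_iff (u v p₁ p₂ : ℝ) :
    (p₁ = (u + p₂) / 2 ∧ p₂ = (v + p₁) / 2) ↔ (p₁ = (2 * u + v) / 3 ∧ p₂ = (2 * v + u) / 3) := by
  constructor <;> rintro ⟨h₁, h₂⟩ <;> constructor <;> linarith

theorem price_nash_equilibrium_fine_naive_general
    (T a b q1 q2 C1 C2 S1 S2 ZA f1 f2 : ℝ)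
    (hT : 0 < T) (hab : a + b < 1) :
    let D1 : ℝ → ℝ → ℝ := fun p1 p2 =>
      a + (1 - a - b) / 2 + (p2 - p1) / (2 * T * (1 - a - b))
    let π1 : ℝ → ℝ → ℝ := fun p1 p2 =>
      (p1 - f1) * D1 p1 p2 - C1 * (a - ZA) ^ 2 - S1 * q1 ^ 2 * (a - ZA) ^ 2
    let π2 : ℝ → ℝ → ℝ := fun p1 p2 =>
      (p2 - f2) * (1 - D1 p1 p2) - C2 * (1 - b - ZA) ^ 2 - S2 * q2 ^ 2 * (1 - b - ZA) ^ 2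
    let p1star : ℝ := T * (1 - a - b) * (1 + (a - b) / 3) + (2 / 3) * f1 + (1 / 3) * f2
    let p2star : ℝ := T * (1 - a - b) * (1 + (b - a) / 3) + (2 / 3) * f2 + (1 / 3) * f1
    ((∀ p : ℝ, π1 p p2star ≤ π1 p1star p2star) ∧
      (∀ p : ℝ, π2 p1star p ≤ π2 p1star p2star)) ∧
    ∀ p1 p2 : ℝ,
      ((∀ p : ℝ, π1 p p2 ≤ π1 p1 p2) ∧ (∀ p : ℝ, π2 p1 p ≤ π2 p1 p2)) →
      p1 = p1star ∧ p2 = p2star := by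
  intro D1 π1 π2 p1star p2star
  have hc : 0 < 2 * T * (1 - a - b) := by
    have : 0 < 1 - a - b := by linarith
    positivity
  have nash : ∀ p1 p2, ((∀ p, π1 p p2 ≤ π1 p1 p2) ∧ (∀ p, π2 p1 p ≤ π2 p1 p2)) ↔
      p1 = p1star ∧ p2 = p2star := by
    intro p1 p2
    have hD2 : ∀ p, 1 - D1 p1 p =
        (1 - (a + (1 - a - b) / 2)) + (p1 - p) / (2 * T * (1 - a - b)) := fun p => by
      simp only [D1]; ring
    simp only [π1, π2, hD2, D1, sub_le_sub_iff_right, linear_demand_profit_le_iff hc]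
    convert best_response_fixed_point_iff (2 * T * (1 - a - b) * (a + (1 - a - b) / 2) + f1)
      (2 * T * (1 - a - b) * (1 - (a + (1 - a - b) / 2)) + f2) p1 p2 using 3 <;> ring
  exact ⟨(nash _ _).2 ⟨rfl, rfl⟩, fun p1 p2 => (nash p1 p2).1⟩

/-- Corollary 2: with naïve consumers (β = 0) and fines `f1, f2 ≥ 0`, the unique
price Nash equilibrium is `p1* = T(1−a−b)(1+(a−b)/3) + 2f1/3 + f2/3` and
`p2* = T(1−a−b)(1+(b−a)/3) + 2f2/3 + f1/3`. -/
theorem price_nash_equilibrium_fine_naive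
    (T a b q1 q2 C1 C2 S1 S2 ZA f1 f2 : ℝ)
    (hT : 0 < T) (ha : 0 ≤ a) (hb : 0 ≤ b) (hab : a + b < 1)
    (hC1 : 0 ≤ C1) (hC2 : 0 ≤ C2) (hS1 : 0 ≤ S1) (hS2 : 0 ≤ S2)
    (hf1 : 0 ≤ f1) (hf2 : 0 ≤ f2) :
    let D1 : ℝ → ℝ → ℝ := fun p1 p2 =>
      a + (1 - a - b) / 2 + (p2 - p1) / (2 * T * (1 - a - b))
    let π1 : ℝ → ℝ → ℝ := fun p1 p2 =>
      (p1 - f1) * D1 p1 p2 - C1 * (a - ZA) ^ 2 - S1 * q1 ^ 2 * (a - ZA) ^ 2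
    let π2 : ℝ → ℝ → ℝ := fun p1 p2 =>
      (p2 - f2) * (1 - D1 p1 p2) - C2 * (1 - b - ZA) ^ 2 - S2 * q2 ^ 2 * (1 - b - ZA) ^ 2
    let p1star : ℝ := T * (1 - a - b) * (1 + (a - b) / 3) + (2 / 3) * f1 + (1 / 3) * f2
    let p2star : ℝ := T * (1 - a - b) * (1 + (b - a) / 3) + (2 / 3) * f2 + (1 / 3) * f1
    ((∀ p : ℝ, π1 p p2star ≤ π1 p1star p2star) ∧
      (∀ p : ℝ, π2 p1star p ≤ π2 p1star p2star)) ∧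
    ∀ p1 p2 : ℝ,
      ((∀ p : ℝ, π1 p p2 ≤ π1 p1 p2) ∧ (∀ p : ℝ, π2 p1 p ≤ π2 p1 p2)) →
      p1 = p1star ∧ p2 = p2star :=
  price_nash_equilibrium_fine_naive_general T a b q1 q2 C1 C2 S1 S2 ZA f1 f2 hT hab
end

section
/- Fix T > 0, 0 ≤ a, 0 ≤ b ≤ 1, a + b < 1, Z_A ∈ ℝ, C1, S1 ≥ 0, F > 0, and 0 < q^min ≤ Q, with β = 0 and the opponent playing q2 = q^min (so the opponent pays no fine, f2 = 0). Define f1(q) = F·(q^min − q) for q ≤ q^min and f1(q) = 0 for q > q^min, and π̂1(q1) = (p1*(q1) − f1(q1))²/(2T(1−a−b)) − C1(a−Z_A)² − S1·q1²·(a−Z_A)², where p1*(q1) = T(1−a−b)(1+(a−b)/3) + (2/3)f1(q1). If F² − 18·T·S1·(1−a−b)·(a−Z_A)² ≥ 0 and 3 + a − b − F·q^min/(T(1−a−b)) ≥ 0, then π̂1 is nondecreasing on [0, q^min], nonincreasing on [q^min, Q], and attains its maximum on [0,Q] at q1 = q^min. -/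
/-- Under the regulator's fine (with the opponent at `q^min`, so `f2 = 0`), if
the two sufficient conditions hold, vendor 1's reduced utility is nondecreasing
on `[0, q^min]`, nonincreasing on `[q^min, Q]`, and maximized at `q^min`. -/
theorem fine_quality_best_response
    (T a b ZA C1 S1 F qmin Q : ℝ)
    (hT : 0 < T) (ha : 0 ≤ a) (hb : 0 ≤ b) (hb1 : b ≤ 1) (hab : a + b < 1)
    (hC1 : 0 ≤ C1) (hS1 : 0 ≤ S1) (hF : 0 < F) (hqmin : 0 < qmin) (hqQ : qmin ≤ Q)
    (hcond1 : 0 ≤ F ^ 2 - 18 * T * S1 * (1 - a - b) * (a - ZA) ^ 2)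
    (hcond2 : 0 ≤ 3 + a - b - F * qmin / (T * (1 - a - b))) :
    let f1 : ℝ → ℝ := fun q => if q ≤ qmin then F * (qmin - q) else 0
    let p1star : ℝ → ℝ := fun q1 =>
      T * (1 - a - b) * (1 + (a - b) / 3) + (2 / 3) * f1 q1
    let π1 : ℝ → ℝ := fun q1 =>
      (p1star q1 - f1 q1) ^ 2 / (2 * T * (1 - a - b)) -
        C1 * (a - ZA) ^ 2 - S1 * q1 ^ 2 * (a - ZA) ^ 2
    MonotoneOn π1 (Set.Icc 0 qmin) ∧ AntitoneOn π1 (Set.Icc qmin Q) ∧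
      ∀ q ∈ Set.Icc (0:ℝ) Q, π1 q ≤ π1 qmin := by
  intro f1 p1star π1
  have hone : 0 < 1 - a - b := by linarith
  have hK : 0 < T * (1 - a - b) := mul_pos hT hone
  have hD : 0 ≤ (a - ZA) ^ 2 := sq_nonneg _
  -- condition 2 without division
  have hcond2' : F * qmin ≤ 3 * (T * (1 - a - b) * (1 + (a - b) / 3)) := by
    have h1 : F * qmin / (T * (1 - a - b)) ≤ 3 + a - b := by linarith
    have h2 : F * qmin ≤ (3 + a - b) * (T * (1 - a - b)) := (div_le_iff₀ hK).mp h1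
    nlinarith
  have hcond1' : 18 * (T * (1 - a - b)) * S1 * (a - ZA) ^ 2 ≤ F ^ 2 := by nlinarith
  -- value on [0, qmin]
  have hval : ∀ z : ℝ, z ≤ qmin → π1 z =
      ((T * (1 - a - b) * (1 + (a - b) / 3) - F * (qmin - z) / 3) ^ 2
        - 2 * (T * (1 - a - b)) * (S1 * z ^ 2 * (a - ZA) ^ 2)) / (2 * (T * (1 - a - b)))
        - C1 * (a - ZA) ^ 2 := by
    intro z hz
    simp only [π1, p1star, f1, if_pos hz]
    field_simp
    ring
  -- value on [qmin, Q]
  have hval2 : ∀ z : ℝ, qmin ≤ z → π1 z =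
      (T * (1 - a - b) * (1 + (a - b) / 3)) ^ 2 / (2 * T * (1 - a - b))
        - C1 * (a - ZA) ^ 2 - S1 * z ^ 2 * (a - ZA) ^ 2 := by
    intro z hz
    simp only [π1, p1star, f1]
    rcases le_or_gt z qmin with h | h
    · have : z = qmin := le_antisymm h hz
      subst this
      rw [if_pos le_rfl]
      ring_nf
    · rw [if_neg (not_le.mpr h)]
      ring_nf
  -- monotone part
  have mono : ∀ x ∈ Set.Icc (0:ℝ) qmin, ∀ y ∈ Set.Icc (0:ℝ) qmin, x ≤ y → π1 x ≤ π1 y := by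
    intro x hx y hy hxy
    rw [hval x hx.2, hval y hy.2]
    apply sub_le_sub_right
    apply (div_le_div_iff_of_pos_right (by positivity : (0:ℝ) < 2 * (T * (1 - a - b)))).mpr
    have hx0 : 0 ≤ x := hx.1
    have hyq : y ≤ qmin := hy.2
    nlinarith [mul_nonneg (mul_nonneg (sub_nonneg.2 hxy) hF.le)
        (sub_nonneg.2 hcond2'),
      mul_nonneg (mul_nonneg (sub_nonneg.2 hxy) (add_nonneg hx0 (hx0.trans hxy)))
        (sub_nonneg.2 hcond1')]
  have anti : ∀ x ∈ Set.Icc qmin Q, ∀ y ∈ Set.Icc qmin Q, x ≤ y → π1 y ≤ π1 x := by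
    intro x hx y hy hxy
    rw [hval2 x hx.1, hval2 y hy.1]
    have hx0 : 0 ≤ x := hqmin.le.trans hx.1
    have hsq : x ^ 2 ≤ y ^ 2 := pow_le_pow_left₀ hx0 hxy 2
    have := mul_le_mul_of_nonneg_right (mul_le_mul_of_nonneg_left hsq hS1) hD
    linarith
  refine ⟨fun x hx y hy hxy => mono x hx y hy hxy,
    fun x hx y hy hxy => anti x hx y hy hxy, ?_⟩
  intro q hq
  rcases le_total q qmin with h | h
  · exact mono q ⟨hq.1, h⟩ qmin ⟨hqmin.le, le_rfl⟩ h
  · exact anti qmin ⟨le_rfl, hqQ⟩ q ⟨h, hq.2⟩ h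
end

section
/- (Lemma 4, maximal-differentiation case, no fine.) Fix T > 0, Z_A ∈ (0, 1/2], C1 ≥ 0, and b ∈ [0, Z_A] with Z_A + b < 1. Define φ1(a) = T(1−a−b)(3+a−b)²/18 − C1·(a−Z_A)². If C1 ≤ T/(12·Z_A), then a = 0 maximizes φ1 on [0, Z_A], i.e., vendor 1's best response is maximal differentiation a*(b) = 0. -/
/-- Lemma 4 (maximal-differentiation case): if `C1 ≤ T/(12 Z_A)`, vendor 1's
best-response location is `a = 0`. -/
theorem location_best_response_maximal_differentiation
    (T ZA C1 b : ℝ)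
    (hT : 0 < T) (hZA : ZA ∈ Set.Ioc (0:ℝ) (1/2)) (hC1 : 0 ≤ C1)
    (hb : b ∈ Set.Icc (0:ℝ) ZA) (hZb : ZA + b < 1)
    (hcost : C1 ≤ T / (12 * ZA)) :
    let φ1 : ℝ → ℝ := fun a =>
      T * (1 - a - b) * (3 + a - b) ^ 2 / 18 - C1 * (a - ZA) ^ 2
    ∀ a ∈ Set.Icc (0:ℝ) ZA, φ1 a ≤ φ1 0 := by
  intro φ1 a ha
  obtain ⟨hZA0, hZA2⟩ := hZA
  obtain ⟨hb0, hbZ⟩ := hb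
  obtain ⟨ha0, haZ⟩ := ha
  have hT12 : 12 * ZA * C1 ≤ T := by
    have := (div_le_div_iff₀ (by positivity) (by positivity)).mp
      (show C1 / 1 ≤ T / (12 * ZA) by simpa using hcost)
    linarith
  have hb2 : b ≤ 1/2 := le_trans hbZ hZA2
  have hpoly : 0 ≤ a ^ 2 + (5 - b) * a + (2 - b) * b := by nlinarith
  have h1 : 0 ≤ T * (a * (a ^ 2 + (5 - b) * a + (2 - b) * b)) :=
    mul_nonneg hT.le (mul_nonneg ha0 hpoly)
  have h2 : 0 ≤ C1 * a ^ 2 := mul_nonneg hC1 (sq_nonneg a)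
  have h3 : 0 ≤ (T - 12 * ZA * C1) * a := mul_nonneg (by linarith) ha0
  show φ1 a ≤ φ1 0
  simp only [φ1]
  nlinarith [h1, h2, h3]
end

section
/- (Lemma 4, high-customization-cost case, no fine.) Fix T > 0, Z_A ∈ (0, 1/2], and b ∈ [0, Z_A] with Z_A + b < 1. Suppose C1 ≥ T/(9·Z_A). Then the quadratic equation −3T·a² + a·(2T·b − 10T − 36·C1) + T·(b² − 2b − 3) + 36·C1·Z_A = 0 has exactly one positive real root a2, and a = min(a2, Z_A) maximizes φ1(a) = T(1−a−b)(3+a−b)²/18 − C1·(a−Z_A)² on [0, Z_A]. -/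
set_option maxHeartbeats 1000000


/-- Lemma 4 (high-customization-cost case): if `C1 ≥ T/(9 Z_A)`, the quadratic
first-order condition has a unique positive root `a2`, and `min a2 Z_A`
maximizes vendor 1's reduced location utility. -/
theorem location_best_response_high_cost
    (T ZA C1 b : ℝ)
    (hT : 0 < T) (hZA : ZA ∈ Set.Ioc (0:ℝ) (1/2))
    (hb : b ∈ Set.Icc (0:ℝ) ZA) (hZb : ZA + b < 1)
    (hcost : T / (9 * ZA) ≤ C1) :
    let φ1 : ℝ → ℝ := fun a =>
      T * (1 - a - b) * (3 + a - b) ^ 2 / 18 - C1 * (a - ZA) ^ 2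
    let quad : ℝ → ℝ := fun a =>
      -3 * T * a ^ 2 + a * (2 * T * b - 10 * T - 36 * C1) +
        T * (b ^ 2 - 2 * b - 3) + 36 * C1 * ZA
    ∃ a2 : ℝ, 0 < a2 ∧ quad a2 = 0 ∧
      (∀ x : ℝ, 0 < x → quad x = 0 → x = a2) ∧
      ∀ a ∈ Set.Icc (0:ℝ) ZA, φ1 a ≤ φ1 (min a2 ZA) := by
  intro φ1 quad
  obtain ⟨hZA0, hZA2⟩ := hZA
  obtain ⟨hb0, hbZ⟩ := hb
  have hb2 : b ≤ 1/2 := hbZ.trans hZA2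
  have hTZ : T ≤ 9 * ZA * C1 := by
    have := (div_le_iff₀ (by positivity)).mp hcost
    linarith
  have hC1 : 0 < C1 := lt_of_lt_of_le (by positivity) hcost
  set B : ℝ := 2 * T * b - 10 * T - 36 * C1 with hB
  set Cc : ℝ := T * (b ^ 2 - 2 * b - 3) + 36 * C1 * ZA with hCc
  have hCpos : 0 < Cc := by
    have h1 : 36 * C1 * ZA ≥ 4 * T := by nlinarith
    nlinarith [sq_nonneg b, sq_nonneg (b - 1/2)]
  have hBneg : B < 0 := by nlinarith
  set D : ℝ := B ^ 2 + 12 * T * Cc with hD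
  have hDpos : 0 ≤ D := by nlinarith
  set s : ℝ := Real.sqrt D with hs
  have hs0 : 0 ≤ s := Real.sqrt_nonneg D
  have hs2 : s ^ 2 = D := Real.sq_sqrt hDpos
  have hsB : -B < s := by nlinarith
  set a2 : ℝ := (B + s) / (6 * T) with ha2
  have ha2pos : 0 < a2 := by
    apply div_pos (by linarith) (by linarith)
  have hq2 : quad a2 = 0 := by
    have key : 12 * T * quad a2 = D - s ^ 2 := by
      simp only [quad, ha2, hD, hCc, hB]
      field_simp
      ring
    have h0 : 12 * T * quad a2 = 0 := by rw [key, hs2]; ring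
    rcases mul_eq_zero.mp h0 with h | h
    · exact absurd h (by positivity)
    · exact h
  refine ⟨a2, ha2pos, hq2, ?_, ?_⟩
  · intro x hx hqx
    have fact : (x - a2) * (-(3 * T) * (x + a2) + B) = 0 := by
      simp only [quad, hB] at hqx hq2 ⊢
      linear_combination hqx - hq2
    rcases mul_eq_zero.mp fact with h | h
    · linarith
    · nlinarith
  · intro a ha
    obtain ⟨ha0, haZ⟩ := ha
    set m : ℝ := min a2 ZA with hm
    have hm0 : 0 < m := lt_min ha2pos hZA0
    have hma2 : m ≤ a2 := min_le_left _ _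
    have id18 : 18 * (φ1 m - φ1 a) =
        (m - a) * quad m + (m - a) ^ 2 * (T * (a + 2 * m - b + 5) + 18 * C1) := by
      simp only [φ1, quad, hB, hCc]
      ring
    have hfac : 0 < T * (a + 2 * m - b + 5) + 18 * C1 := by nlinarith
    have hqm : quad m = (m - a2) * (-(3 * T) * (m + a2) + B) := by
      simp only [quad, hB] at hq2 ⊢
      linear_combination hq2
    have hquadm : 0 ≤ quad m := by
      rw [hqm]
      have h1 : 0 ≤ a2 - m := by linarith
      have h2 : 0 ≤ -(-(3 * T) * (m + a2) + B) := by nlinarith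
      nlinarith [mul_nonneg h1 h2]
    have hterm : 0 ≤ (m - a) * quad m := by
      rcases le_or_gt a m with hle | hlt
      · exact mul_nonneg (by linarith) hquadm
      · have hmin : m = a2 := by
          rcases le_or_gt a2 ZA with h | h
          · exact min_eq_left h
          · exfalso
            have : m = ZA := min_eq_right h.le
            linarith
        rw [hmin, hq2, mul_zero]
    nlinarith [sq_nonneg (m - a), mul_nonneg (sq_nonneg (m - a)) hfac.le]
end

section
/- (Proposition 2: maximal differentiation is a location Nash equilibrium.) Fix T > 0 and Z_A ∈ (0,1), and C1, C2 ≥ 0 with C1 ≤ T/(12·Z_A) and C2 ≤ T/(12·(1−Z_A)). Define, for naïve consumers with zero security investment, the reduced location utilities φ1(a;b) = T(1−a−b)(3+a−b)²/18 − C1·(a−Z_A)² and φ2(b;a) = T(1−a−b)(3+b−a)²/18 − C2·(1−b−Z_A)². Then (a,b) = (0,0) is a location Nash equilibrium: a = 0 maximizes φ1(·;0) on [0, Z_A] and b = 0 maximizes φ2(·;0) on [0, 1−Z_A]. -/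
lemma aux_max_diff (T x C a : ℝ) (hT : 0 < T) (hx : 0 < x)
    (hC : 0 ≤ C) (hCx : 12 * x * C ≤ T) (ha : 0 ≤ a) (hax : a ≤ x) :
    T * (1 - a) * (3 + a) ^ 2 / 18 - C * (a - x) ^ 2 ≤
      T * 1 * 3 ^ 2 / 18 - C * x ^ 2 := by
  nlinarith [mul_nonneg ha (sub_nonneg.2 hCx), mul_nonneg hC (sq_nonneg a),
    mul_nonneg (mul_nonneg hT.le ha) ha,
    mul_nonneg (mul_nonneg (mul_nonneg hT.le ha) ha) ha]

/-- Proposition 2: when `C1 ≤ T/(12 Z_A)` and `C2 ≤ T/(12 (1−Z_A))`, maximal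
differentiation `(a, b) = (0, 0)` is a location Nash equilibrium. -/
theorem maximal_differentiation_nash
    (T ZA C1 C2 : ℝ)
    (hT : 0 < T) (hZA : ZA ∈ Set.Ioo (0:ℝ) 1)
    (hC1 : 0 ≤ C1) (hC2 : 0 ≤ C2)
    (hcost1 : C1 ≤ T / (12 * ZA)) (hcost2 : C2 ≤ T / (12 * (1 - ZA))) :
    let φ1 : ℝ → ℝ → ℝ := fun a b =>
      T * (1 - a - b) * (3 + a - b) ^ 2 / 18 - C1 * (a - ZA) ^ 2
    let φ2 : ℝ → ℝ → ℝ := fun b a =>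
      T * (1 - a - b) * (3 + b - a) ^ 2 / 18 - C2 * (1 - b - ZA) ^ 2
    (∀ a ∈ Set.Icc (0:ℝ) ZA, φ1 a 0 ≤ φ1 0 0) ∧
      (∀ b ∈ Set.Icc (0:ℝ) (1 - ZA), φ2 b 0 ≤ φ2 0 0) := by
  obtain ⟨hZ0, hZ1⟩ := hZA
  have hZ1' : 0 < 1 - ZA := by linarith
  intro φ1 φ2
  constructor
  · intro a ⟨ha0, haZ⟩
    have h12 : 12 * ZA * C1 ≤ T := by
      rw [le_div_iff₀ (by positivity)] at hcost1; linarith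
    have := aux_max_diff T ZA C1 a hT hZ0 hC1 h12 ha0 haZ
    simp only [φ1]
    nlinarith [this]
  · intro b ⟨hb0, hbZ⟩
    have h12 : 12 * (1 - ZA) * C2 ≤ T := by
      rw [le_div_iff₀ (by positivity)] at hcost2; linarith
    have := aux_max_diff T (1 - ZA) C2 b hT hZ1' hC2 h12 hb0 hbZ
    simp only [φ2]
    nlinarith [this]
end

section
/- (Lemma 3, maximal-differentiation case, with fine.) Fix T > 0, Z_A ∈ (0, 1/2], C1, S1 ≥ 0, q^min > 0, and b ∈ [0, Z_A] with Z_A + b < 1. Define φ1^F(a) = T(1−a−b)(3+a−b)²/18 − (C1 + S1·(q^min)²)·(a−Z_A)². If C1 + S1·(q^min)² ≤ T/(12·Z_A), then a = 0 maximizes φ1^F on [0, Z_A], i.e., vendor 1's best response under the fine is maximal differentiation a*(b) = 0. -/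
/-- Lemma 3 (maximal-differentiation case, with fine): if
`C1 + S1 (q^min)² ≤ T/(12 Z_A)`, vendor 1's best-response location under the
fine is `a = 0`. -/
theorem fine_location_best_response_maximal_differentiation
    (T ZA C1 S1 qmin b : ℝ)
    (hT : 0 < T) (hZA : ZA ∈ Set.Ioc (0:ℝ) (1/2))
    (hC1 : 0 ≤ C1) (hS1 : 0 ≤ S1) (hqmin : 0 < qmin)
    (hb : b ∈ Set.Icc (0:ℝ) ZA) (hZb : ZA + b < 1)
    (hcost : C1 + S1 * qmin ^ 2 ≤ T / (12 * ZA)) :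
    let φ1 : ℝ → ℝ := fun a =>
      T * (1 - a - b) * (3 + a - b) ^ 2 / 18 -
        (C1 + S1 * qmin ^ 2) * (a - ZA) ^ 2
    ∀ a ∈ Set.Icc (0:ℝ) ZA, φ1 a ≤ φ1 0 := by
  intro φ1 a ha
  obtain ⟨hZA0, hZA2⟩ := hZA
  obtain ⟨hb0, hbZ⟩ := hb
  obtain ⟨ha0, haZ⟩ := ha
  have hK : 0 ≤ C1 + S1 * qmin ^ 2 := by positivity
  have h12 : (C1 + S1 * qmin ^ 2) * (12 * ZA) ≤ T := by
    have h := mul_le_mul_of_nonneg_right hcost (le_of_lt (by positivity : (0:ℝ) < 12 * ZA))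
    rwa [div_mul_cancel₀] at h
    positivity
  have hb2 : b ≤ 1/2 := le_trans hbZ hZA2
  simp only [φ1]
  nlinarith [mul_nonneg (mul_nonneg hT.le ha0) (mul_nonneg hb0 (by linarith : (0:ℝ) ≤ 2 - b)),
    mul_nonneg (mul_nonneg hT.le (mul_nonneg ha0 ha0)) (by linarith : (0:ℝ) ≤ 5 - b),
    mul_nonneg hT.le (mul_nonneg (mul_nonneg ha0 ha0) ha0),
    mul_nonneg (mul_nonneg hK ha0) (by linarith : (0:ℝ) ≤ ZA - a),
    mul_nonneg ha0 (by linarith : (0:ℝ) ≤ T - (C1 + S1 * qmin ^ 2) * (12 * ZA))]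
end

section
/- (Lemma 3, high-cost case, with fine.) Fix T > 0, Z_A ∈ (0, 1/2], S1 ≥ 0, C1 ≥ 0, q^min > 0, and b ∈ [0, Z_A] with Z_A + b < 1. Suppose C1 + S1·(q^min)² ≥ T/(9·Z_A). Then the quadratic equation −3T·a² + a·(2T·b − 10T − 36·(C1 + S1·(q^min)²)) + T·(b² − 2b − 3) + 36·(C1 + S1·(q^min)²)·Z_A = 0 has exactly one positive real root a2, and a = min(a2, Z_A) maximizes φ1^F(a) = T(1−a−b)(3+a−b)²/18 − (C1 + S1·(q^min)²)·(a−Z_A)² on [0, Z_A]. -/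
/-! The first-order condition `quad = 18 φ1'` has a negative leading coefficient and, in the
high-cost case, a positive constant term, so it has exactly one positive root `a2`, and it is
decreasing on `[0, ∞)`. Expanding `φ1` to second order around `m = min a2 ZA` leaves a remainder
that is nonpositive on `[0, ∞)`, while the first-order term `(a - m) · quad m` is nonpositive for
`a ∈ [0, ZA]`: it vanishes when `m = a2`, and when `m = ZA < a2` we have `a ≤ m` and
`quad ZA ≥ quad a2 = 0`. -/

open Set

section Quadratic

variable {a b c : ℝ}

theorem existsUnique_pos_root_of_neg_of_pos (ha : a < 0) (hc : 0 < c) :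
    ∃! x : ℝ, 0 < x ∧ a * (x * x) + b * x + c = 0 := by
  set s := √(discrim a b c)
  have hdisc : b ^ 2 < discrim a b c := by rw [discrim]; nlinarith
  have hs : discrim a b c = s * s := (Real.mul_self_sqrt (by nlinarith)).symm
  have hbs : |b| < s := (Real.lt_sqrt (abs_nonneg b)).2 (by rwa [sq_abs])
  have h2a : 2 * a < 0 := by linarith
  have hroots := quadratic_eq_zero_iff ha.ne hs
  refine ⟨(-b - s) / (2 * a), ⟨div_pos_of_neg_of_neg ?_ h2a, (hroots _).2 (Or.inr rfl)⟩, ?_⟩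
  · linarith [neg_abs_le b]
  rintro x ⟨hx, hroot⟩
  refine ((hroots x).1 hroot).resolve_left fun hplus => ?_
  have : (-b + s) / (2 * a) < 0 := div_neg_of_pos_of_neg (by linarith [le_abs_self b]) h2a
  linarith

theorem antitoneOn_quadratic (ha : a ≤ 0) (hb : b ≤ 0) :
    AntitoneOn (fun x : ℝ => a * (x * x) + b * x + c) (Ici 0) := by
  intro x hx y hy hxy
  simp only [mem_Ici] at hx hy
  nlinarith [mul_nonneg (add_nonneg hx hy) (sub_nonneg.2 hxy)]

end Quadratic

noncomputable section FineUtility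

variable {T b K ZA : ℝ}

/-- Vendor 1's reduced location utility `φ1^F`, with `K = C1 + S1 (q^min)²`. -/
def fineUtility (T b K ZA a : ℝ) : ℝ :=
  T * (1 - a - b) * (3 + a - b) ^ 2 / 18 - K * (a - ZA) ^ 2

def fineFOC (T b K ZA a : ℝ) : ℝ :=
  -3 * T * a ^ 2 + a * (2 * T * b - 10 * T - 36 * K) + T * (b ^ 2 - 2 * b - 3) + 36 * K * ZA

theorem fineFOC_eq (x : ℝ) :
    fineFOC T b K ZA x =
      -3 * T * (x * x) + (2 * T * b - 10 * T - 36 * K) * x + (T * (b ^ 2 - 2 * b - 3) + 36 * K * ZA) := by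
  unfold fineFOC; ring

theorem fineFOC_existsUnique_pos_root (hT : 0 < T) (hb : b < 1) (hK : T ≤ 9 * K * ZA) :
    ∃! x : ℝ, 0 < x ∧ fineFOC T b K ZA x = 0 := by
  simp only [fineFOC_eq]
  refine existsUnique_pos_root_of_neg_of_pos (by linarith) ?_
  nlinarith [mul_pos hT (pow_pos (sub_pos.2 hb) 2)]

theorem fineFOC_antitoneOn (hT : 0 ≤ T) (hK : 0 ≤ K) (hb : b ≤ 5) :
    AntitoneOn (fineFOC T b K ZA) (Ici 0) := by
  have := antitoneOn_quadratic (a := -3 * T) (b := 2 * T * b - 10 * T - 36 * K)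
    (c := T * (b ^ 2 - 2 * b - 3) + 36 * K * ZA) (by linarith) (by nlinarith)
  simpa only [← fineFOC_eq] using this

theorem fineUtility_sub_fineUtility (m a : ℝ) :
    fineUtility T b K ZA m - fineUtility T b K ZA a =
      (m - a) * fineFOC T b K ZA m / 18 + (a - m) ^ 2 * (T * (a + 2 * m + 5 - b) + 18 * K) / 18 := by
  unfold fineUtility fineFOC; ring

theorem fineUtility_le_of_foc {a m : ℝ} (hT : 0 ≤ T) (hK : 0 ≤ K) (hb : b ≤ 5) (ha : 0 ≤ a)
    (hm : 0 ≤ m) (hfoc : 0 ≤ (m - a) * fineFOC T b K ZA m) :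
    fineUtility T b K ZA a ≤ fineUtility T b K ZA m := by
  have hrem : 0 ≤ T * (a + 2 * m + 5 - b) + 18 * K := by
    have := mul_nonneg hT (by linarith : (0 : ℝ) ≤ a + 2 * m + 5 - b)
    linarith
  have := fineUtility_sub_fineUtility (T := T) (b := b) (K := K) (ZA := ZA) m a
  nlinarith [mul_nonneg (sq_nonneg (a - m)) hrem]

theorem fineUtility_le_min_root {a a2 : ℝ} (hT : 0 ≤ T) (hK : 0 ≤ K) (hb : b ≤ 5) (hZA : 0 ≤ ZA)
    (ha2 : 0 ≤ a2) (hroot : fineFOC T b K ZA a2 = 0) (ha : a ∈ Icc 0 ZA) :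
    fineUtility T b K ZA a ≤ fineUtility T b K ZA (min a2 ZA) := by
  refine fineUtility_le_of_foc hT hK hb ha.1 (le_min ha2 hZA) ?_
  rcases min_cases a2 ZA with ⟨hm, -⟩ | ⟨hm, hlt⟩
  · rw [hm, hroot, mul_zero]
  · rw [hm]
    refine mul_nonneg (sub_nonneg.2 ha.2) ?_
    exact hroot ▸ fineFOC_antitoneOn hT hK hb (mem_Ici.2 hZA) (mem_Ici.2 ha2) hlt.le

end FineUtility

theorem fine_location_best_response_high_cost_general
    (T ZA C1 S1 qmin b : ℝ)
    (hT : 0 < T) (hZA : ZA ∈ Set.Ioc (0:ℝ) (1/2))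
    (hb : b ∈ Set.Icc (0:ℝ) ZA)
    (hcost : T / (9 * ZA) ≤ C1 + S1 * qmin ^ 2) :
    let φ1 : ℝ → ℝ := fun a =>
      T * (1 - a - b) * (3 + a - b) ^ 2 / 18 -
        (C1 + S1 * qmin ^ 2) * (a - ZA) ^ 2
    let quad : ℝ → ℝ := fun a =>
      -3 * T * a ^ 2 + a * (2 * T * b - 10 * T - 36 * (C1 + S1 * qmin ^ 2)) +
        T * (b ^ 2 - 2 * b - 3) + 36 * (C1 + S1 * qmin ^ 2) * ZA
    ∃ a2 : ℝ, 0 < a2 ∧ quad a2 = 0 ∧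
      (∀ x : ℝ, 0 < x → quad x = 0 → x = a2) ∧
      ∀ a ∈ Set.Icc (0:ℝ) ZA, φ1 a ≤ φ1 (min a2 ZA) := by
  intro φ1 quad
  obtain ⟨hZA0, hZA2⟩ := hZA
  have hb1 : b ≤ 1 / 2 := hb.2.trans hZA2
  have hK : T ≤ 9 * (C1 + S1 * qmin ^ 2) * ZA := by
    rw [div_le_iff₀ (by positivity)] at hcost; linarith
  have hK0 : 0 ≤ C1 + S1 * qmin ^ 2 := (div_pos hT (by positivity)).le.trans hcost
  obtain ⟨a2, ⟨ha2, hroot⟩, huniq⟩ := fineFOC_existsUnique_pos_root hT (by linarith) hK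
  refine ⟨a2, ha2, hroot, fun x hx hqx => huniq x ⟨hx, hqx⟩, fun a ha => ?_⟩
  exact fineUtility_le_min_root hT.le hK0 (by linarith) hZA0.le ha2.le hroot ha

/-- Lemma 3 (high-cost case, with fine): if `C1 + S1 (q^min)² ≥ T/(9 Z_A)`, the
quadratic first-order condition has a unique positive root `a2`, and
`min a2 Z_A` maximizes vendor 1's reduced location utility under the fine. -/
theorem fine_location_best_response_high_cost
    (T ZA C1 S1 qmin b : ℝ)
    (hT : 0 < T) (hZA : ZA ∈ Set.Ioc (0:ℝ) (1/2))
    (hC1 : 0 ≤ C1) (hS1 : 0 ≤ S1) (hqmin : 0 < qmin)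
    (hb : b ∈ Set.Icc (0:ℝ) ZA) (hZb : ZA + b < 1)
    (hcost : T / (9 * ZA) ≤ C1 + S1 * qmin ^ 2) :
    let φ1 : ℝ → ℝ := fun a =>
      T * (1 - a - b) * (3 + a - b) ^ 2 / 18 -
        (C1 + S1 * qmin ^ 2) * (a - ZA) ^ 2
    let quad : ℝ → ℝ := fun a =>
      -3 * T * a ^ 2 + a * (2 * T * b - 10 * T - 36 * (C1 + S1 * qmin ^ 2)) +
        T * (b ^ 2 - 2 * b - 3) + 36 * (C1 + S1 * qmin ^ 2) * ZA
    ∃ a2 : ℝ, 0 < a2 ∧ quad a2 = 0 ∧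
      (∀ x : ℝ, 0 < x → quad x = 0 → x = a2) ∧
      ∀ a ∈ Set.Icc (0:ℝ) ZA, φ1 a ≤ φ1 (min a2 ZA) :=
  fine_location_best_response_high_cost_general T ZA C1 S1 qmin b hT hZA hb hcost
end
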